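/- arXiv:2604.08380 — 5 statements merged into one kernel-verified Lean document; each statement's English description precedes it below -/
import Mathlib

section
/- The positive cone of a J*-algebra is self-dual with respect to the trace: for a ∈ J, a is positive semidefinite if and only if tr(ab) ≥ 0 for all positive semidefinite b ∈ J. -/
open Matrix ComplexOrder Polynomial

private lemma psd_trace_nonneg' {n : ℕ} {M : Matrix (Fin n) (Fin n) ℂ} (hM : M.PosSemidef) :
    0 ≤ M.trace := by
  rw [Matrix.trace]
  refine Finset.sum_nonneg fun i _ => ?_
  have := hM.dotProduct_mulVec_nonneg (Pi.single i 1)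
  simpa [dotProduct, Matrix.mulVec, Pi.single_apply, Finset.sum_ite_eq] using this

private lemma pow_mem' {n : ℕ} (J : Submodule ℂ (Matrix (Fin n) (Fin n) ℂ))
    (hone : (1 : Matrix (Fin n) (Fin n) ℂ) ∈ J)
    (hjordan : ∀ a ∈ J, ∀ b ∈ J, (2 : ℂ)⁻¹ • (a * b + b * a) ∈ J)
    (a : Matrix (Fin n) (Fin n) ℂ) (ha : a ∈ J) : ∀ k, a ^ k ∈ J := by
  intro k
  induction k with
  | zero => simpa using hone
  | succ k ih =>
    have := hjordan a ha (a ^ k) ih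
    have h2 : (2 : ℂ)⁻¹ • (a * a ^ k + a ^ k * a) = a ^ (k + 1) := by
      rw [← pow_succ', ← pow_succ, ← two_smul ℂ, smul_smul]
      norm_num
    rwa [h2] at this

private lemma aeval_mem' {n : ℕ} (J : Submodule ℂ (Matrix (Fin n) (Fin n) ℂ))
    (a : Matrix (Fin n) (Fin n) ℂ) (hpow : ∀ k, a ^ k ∈ J) (q : ℝ[X]) :
    Polynomial.aeval a q ∈ J := by
  rw [Polynomial.aeval_eq_sum_range]
  refine Submodule.sum_mem _ fun k _ => ?_
  rw [← algebraMap_smul ℂ (q.coeff k) (a ^ k)]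
  exact J.smul_mem _ (hpow k)

private lemma cfc_psd' {n : ℕ} {h : Matrix (Fin n) (Fin n) ℂ} (hh : h.IsHermitian) (f : ℝ → ℝ)
    (hf : ∀ i, 0 ≤ f (hh.eigenvalues i)) : (hh.cfc f).PosSemidef := by
  rw [Matrix.IsHermitian.cfc, Unitary.conjStarAlgAut_apply, Matrix.star_eq_conjTranspose]
  refine (Matrix.posSemidef_diagonal_iff.mpr fun i => ?_).mul_mul_conjTranspose_same _
  simpa using Complex.zero_le_real.mpr (hf i)

private lemma trace_mul_cfc' {n : ℕ} {h : Matrix (Fin n) (Fin n) ℂ} (hh : h.IsHermitian)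
    (f : ℝ → ℝ) :
    (h * hh.cfc f).trace = ∑ i, ((hh.eigenvalues i : ℂ) * (f (hh.eigenvalues i) : ℂ)) := by
  have hU : star (hh.eigenvectorUnitary : Matrix (Fin n) (Fin n) ℂ) *
      (hh.eigenvectorUnitary : Matrix (Fin n) (Fin n) ℂ) = 1 :=
    Unitary.star_mul_self_of_mem (Matrix.IsHermitian.eigenvectorUnitary hh).2
  rw [Matrix.IsHermitian.cfc]
  nth_rewrite 1 [hh.spectral_theorem]
  simp only [Unitary.conjStarAlgAut_apply, Unitary.coe_star]
  rw [show ∀ (U A B : Matrix (Fin n) (Fin n) ℂ),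
      (U * A * star U) * (U * B * star U) = U * (A * (star U * U) * B) * star U by
    intros; simp only [mul_assoc], hU, mul_one]
  rw [Matrix.trace_mul_cycle, ← mul_assoc, hU, one_mul, Matrix.diagonal_mul_diagonal,
    Matrix.trace_diagonal]
  simp

private lemma trace_eq_sum_eigen' {n : ℕ} {h : Matrix (Fin n) (Fin n) ℂ} (hh : h.IsHermitian) :
    h.trace = ∑ i, (hh.eigenvalues i : ℂ) := by
  have hU : star (hh.eigenvectorUnitary : Matrix (Fin n) (Fin n) ℂ) *
      (hh.eigenvectorUnitary : Matrix (Fin n) (Fin n) ℂ) = 1 :=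
    Unitary.star_mul_self_of_mem (Matrix.IsHermitian.eigenvectorUnitary hh).2
  nth_rewrite 1 [hh.spectral_theorem]
  simp only [Unitary.conjStarAlgAut_apply, Unitary.coe_star]
  rw [Matrix.trace_mul_cycle, hU, one_mul, Matrix.trace_diagonal]
  simp

private lemma cfc_mem' {n : ℕ} (J : Submodule ℂ (Matrix (Fin n) (Fin n) ℂ))
    {h : Matrix (Fin n) (Fin n) ℂ} (hh : h.IsHermitian)
    (haev : ∀ q : ℝ[X], Polynomial.aeval h q ∈ J) (f : ℝ → ℝ) :
    hh.cfc f ∈ J := by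
  classical
  set s : Finset ℝ := Finset.image hh.eigenvalues Finset.univ with hs
  set q : ℝ[X] := Lagrange.interpolate s id f with hq
  have hqe : ∀ x ∈ s, q.eval x = f x := by
    intro x hx
    have := Lagrange.eval_interpolate_at_node (v := id) (r := f) (Set.injOn_id _) hx
    simpa [hq] using this
  have hcont1 : ContinuousOn f (spectrum ℝ h) :=
    (Matrix.finite_real_spectrum (A := h)).continuousOn f
  have e1 : hh.cfc f = cfc f h := (Matrix.IsHermitian.cfc_eq hh f).symm
  have e2 : cfc f h = cfc (fun x => q.eval x) h := by
    apply cfc_congr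
    intro x hx
    obtain ⟨i, rfl⟩ := (hh.spectrum_real_eq_range_eigenvalues ▸ hx : x ∈ Set.range hh.eigenvalues)
    exact (hqe _ (Finset.mem_image_of_mem _ (Finset.mem_univ i))).symm
  have e3 : cfc (fun x => q.eval x) h = Polynomial.aeval h q :=
    cfc_polynomial q h (ha := hh)
  rw [e1, e2, e3]
  exact haev q

/-- Self-duality of the positive cone of a J*-algebra with respect to the
trace: for `a ∈ J`, `a` is positive semidefinite if and only if
`tr (a * b) ≥ 0` for every positive semidefinite `b ∈ J`. -/
theorem jstar_cone_selfdual {n : ℕ}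
    (J : Submodule ℂ (Matrix (Fin n) (Fin n) ℂ))
    (hone : (1 : Matrix (Fin n) (Fin n) ℂ) ∈ J)
    (hstar : ∀ a ∈ J, aᴴ ∈ J)
    (hjordan : ∀ a ∈ J, ∀ b ∈ J, (2 : ℂ)⁻¹ • (a * b + b * a) ∈ J)
    (a : Matrix (Fin n) (Fin n) ℂ) (ha : a ∈ J) :
    a.PosSemidef ↔ ∀ b ∈ J, b.PosSemidef → 0 ≤ (a * b).trace := by
  constructor
  · -- forward direction
    intro hA b hbJ hb
    obtain ⟨S, hs, hSS⟩ : ∃ S : Matrix (Fin n) (Fin n) ℂ, S.PosSemidef ∧ S * S = a := by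
      open scoped MatrixOrder in
      exact ⟨CFC.sqrt a, (CFC.sqrt_nonneg a).posSemidef, CFC.sqrt_mul_sqrt_self a hA.nonneg⟩
    have hpsd : (Sᴴ * b * S).PosSemidef := hb.conjTranspose_mul_mul_same _
    rw [hs.1.eq] at hpsd
    have e : (a * b).trace = (S * b * S).trace := by
      rw [Matrix.trace_mul_cycle, hSS]
    rw [e]
    exact psd_trace_nonneg' hpsd
  · -- reverse direction
    intro H
    -- trace of a is real and nonneg
    have hta : 0 ≤ a.trace := by simpa using H 1 hone Matrix.PosSemidef.one
    have htaim : a.trace.im = 0 := ((Complex.le_def.mp hta).2).symm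
    have key : ∀ b ∈ J, b.PosSemidef → ((a - aᴴ) * b).trace = 0 := by
      intro b hbJ hb
      have h1 := H b hbJ hb
      have him : ((a * b).trace).im = 0 := ((Complex.le_def.mp h1).2).symm
      have h2 : (aᴴ * b).trace = star ((a * b).trace) := by
        rw [← Matrix.trace_conjTranspose, Matrix.conjTranspose_mul, hb.1.eq,
          Matrix.trace_mul_comm]
      have h3 : star ((a * b).trace) = (a * b).trace := by
        rw [Complex.star_def, Complex.conj_eq_iff_im]
        exact him
      rw [Matrix.sub_mul, Matrix.trace_sub, h2, h3, sub_self]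
    -- the skew part
    set c : Matrix (Fin n) (Fin n) ℂ := a - aᴴ with hc
    have hcJ : c ∈ J := J.sub_mem ha (hstar a ha)
    set h : Matrix (Fin n) (Fin n) ℂ := Complex.I • c with hhdef
    have hhJ : h ∈ J := J.smul_mem _ hcJ
    have hh : h.IsHermitian := by
      show hᴴ = h
      rw [hhdef, Matrix.conjTranspose_smul, hc, Matrix.conjTranspose_sub,
        Matrix.conjTranspose_conjTranspose]
      rw [show star Complex.I = -Complex.I by simp [Complex.star_def, Complex.conj_I]]
      rw [neg_smul, ← smul_neg, neg_sub]
    set t : ℝ := ∑ i, |hh.eigenvalues i| with ht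
    have hf : ∀ i, 0 ≤ hh.eigenvalues i + t := by
      intro i
      have h1 : |hh.eigenvalues i| ≤ ∑ j, |hh.eigenvalues j| :=
        Finset.single_le_sum (f := fun j => |hh.eigenvalues j|)
          (fun j _ => abs_nonneg _) (Finset.mem_univ i)
      rw [← ht] at h1
      have h2 := neg_abs_le (hh.eigenvalues i)
      linarith
    have hbpsd : (hh.cfc (fun x => x + t)).PosSemidef := cfc_psd' hh _ hf
    have hbJ : hh.cfc (fun x => x + t) ∈ J :=
      cfc_mem' J hh (aeval_mem' J h (pow_mem' J hone hjordan h hhJ)) _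
    have trace0 : (h * hh.cfc (fun x => x + t)).trace = 0 := by
      have e : h * (hh.cfc fun x => x + t) = Complex.I • (c * hh.cfc fun x => x + t) :=
        smul_mul_assoc _ _ _
      rw [e, Matrix.trace_smul, key _ hbJ hbpsd, smul_zero]
    rw [trace_mul_cfc'] at trace0
    have sum1 : ∑ i, hh.eigenvalues i * (hh.eigenvalues i + t) = 0 := by
      have h' := trace0
      push_cast at h'
      have : ((∑ i, hh.eigenvalues i * (hh.eigenvalues i + t) : ℝ) : ℂ) = 0 := by
        push_cast
        exact h'
      exact_mod_cast this
    -- trace of h is zero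
    have htrc : c.trace = 0 := by
      rw [hc, Matrix.trace_sub, Matrix.trace_conjTranspose, sub_eq_zero]
      exact (Complex.conj_eq_iff_im.mpr htaim).symm
    have htrh : h.trace = 0 := by
      rw [hhdef, Matrix.trace_smul, htrc, smul_zero]
    rw [trace_eq_sum_eigen' hh] at htrh
    have sum2 : ∑ i, hh.eigenvalues i = 0 := by
      have : ((∑ i, hh.eigenvalues i : ℝ) : ℂ) = 0 := by push_cast; exact htrh
      exact_mod_cast this
    have sum3 : ∑ i, hh.eigenvalues i ^ 2 = 0 := by
      have e : ∑ i, hh.eigenvalues i * (hh.eigenvalues i + t)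
          = (∑ i, hh.eigenvalues i ^ 2) + t * (∑ i, hh.eigenvalues i) := by
        rw [Finset.mul_sum, ← Finset.sum_add_distrib]
        exact Finset.sum_congr rfl fun i _ => by ring
      rw [e, sum2, mul_zero, add_zero] at sum1
      exact sum1
    have hzero : ∀ i, hh.eigenvalues i = 0 := by
      intro i
      have := (Finset.sum_eq_zero_iff_of_nonneg
        (fun i _ => sq_nonneg (hh.eigenvalues i))).mp sum3 i (Finset.mem_univ i)
      exact (pow_eq_zero_iff two_ne_zero).mp this
    have hh0 : h = 0 := by
      nth_rewrite 1 [hh.spectral_theorem]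
      have : Matrix.diagonal (RCLike.ofReal ∘ hh.eigenvalues : Fin n → ℂ) = 0 := by
        ext i j
        rcases eq_or_ne i j with rfl | hij
        · simp [hzero i]
        · simp [Matrix.diagonal_apply_ne _ hij]
      rw [this, map_zero]
    have hc0 : c = 0 := by
      have hIc : Complex.I • c = 0 := by rw [← hhdef]; exact hh0
      rcases smul_eq_zero.mp hIc with h' | h'
      · exact absurd h' Complex.I_ne_zero
      · exact h'
    have haH : a.IsHermitian := by
      show aᴴ = a
      exact (sub_eq_zero.mp hc0).symm
    -- now use the negative part
    set g : ℝ → ℝ := fun x => max (-x) 0 with hg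
    have hgpsd : (haH.cfc g).PosSemidef := cfc_psd' haH g (fun i => le_max_right _ _)
    have hgJ : haH.cfc g ∈ J :=
      cfc_mem' J haH (aeval_mem' J a (pow_mem' J hone hjordan a ha)) g
    have h4 := H _ hgJ hgpsd
    rw [trace_mul_cfc' haH g] at h4
    have h5 : 0 ≤ ∑ i, haH.eigenvalues i * g (haH.eigenvalues i) := by
      have : (0 : ℂ) ≤ ((∑ i, haH.eigenvalues i * g (haH.eigenvalues i) : ℝ) : ℂ) := by
        push_cast
        exact h4
      exact Complex.zero_le_real.mp this
    have h6 : ∀ i, haH.eigenvalues i * g (haH.eigenvalues i) ≤ 0 := by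
      intro i
      rcases le_or_gt 0 (haH.eigenvalues i) with h' | h'
      · rw [hg]
        simp only
        rw [max_eq_right (by linarith)]
        simp
      · rw [hg]
        simp only
        rw [max_eq_left (by linarith)]
        nlinarith
    have h7 : ∑ i, haH.eigenvalues i * g (haH.eigenvalues i) ≤ 0 :=
      Finset.sum_nonpos fun i _ => h6 i
    have h8 : ∀ i ∈ Finset.univ, haH.eigenvalues i * g (haH.eigenvalues i) = 0 := by
      have := le_antisymm h7 h5
      intro i hi
      exact (Finset.sum_eq_zero_iff_of_nonpos (fun i _ => h6 i)).mp this i hi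
    refine haH.posSemidef_iff_eigenvalues_nonneg.mpr (Pi.le_def.mpr fun i => (?_ : 0 ≤ haH.eigenvalues i))
    by_contra hlt
    push_neg at hlt
    have := h8 i (Finset.mem_univ i)
    rw [hg] at this
    simp only at this
    rw [max_eq_left (by linarith)] at this
    nlinarith
end

section
/- Jordan–Schwarz inequality: for every unital positive linear map T : L(H) → L(K) between matrix algebras and every a ∈ L(H), one has (T(a*)T(a) + T(a)T(a*))/2 ≤ T((a*a + aa*)/2). -/
open Matrix ComplexOrder

section Aux

variable {n m : ℕ}

/-- Kadison's inequality for Hermitian matrices, together with the hermiticity of `T b`. -/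
lemma kadison_aux
    (T : Matrix (Fin n) (Fin n) ℂ →ₗ[ℂ] Matrix (Fin m) (Fin m) ℂ)
    (hpos : ∀ a : Matrix (Fin n) (Fin n) ℂ, a.PosSemidef → (T a).PosSemidef)
    (hunital : T 1 = 1)
    (b : Matrix (Fin n) (Fin n) ℂ) (hb : b.IsHermitian) :
    (T (b * b) - T b * T b).PosSemidef := by
  classical
  set U : Matrix (Fin n) (Fin n) ℂ := (hb.eigenvectorUnitary : Matrix (Fin n) (Fin n) ℂ) with hU
  set lam : Fin n → ℝ := hb.eigenvalues with hlam
  set D : Fin n → Matrix (Fin n) (Fin n) ℂ :=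
    fun i => diagonal (fun j => if j = i then (1 : ℂ) else 0) with hD
  set p : Fin n → Matrix (Fin n) (Fin n) ℂ := fun i => U * D i * Uᴴ with hp
  have hUU : U * Uᴴ = 1 := by
    simpa [star_eq_conjTranspose] using (Matrix.mem_unitaryGroup_iff).mp hb.eigenvectorUnitary.2
  have hUU' : Uᴴ * U = 1 := by
    simpa [star_eq_conjTranspose] using (Matrix.mem_unitaryGroup_iff').mp hb.eigenvectorUnitary.2
  -- the p i are positive semidefinite
  have hppos : ∀ i, (p i).PosSemidef := by
    intro i
    have hDi : (D i).PosSemidef := by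
      rw [hD]
      refine posSemidef_diagonal_iff.mpr fun j => ?_
      positivity
    exact hDi.mul_mul_conjTranspose_same U
  -- decomposition of diagonal matrices
  have hdec : ∀ f : Fin n → ℝ,
      U * diagonal (fun j => (f j : ℂ)) * Uᴴ = ∑ i, (f i : ℂ) • p i := by
    intro f
    have hdg : diagonal (fun j => (f j : ℂ)) = ∑ i, (f i : ℂ) • D i := by
      ext j k
      by_cases h : j = k <;>
        simp [hD, Matrix.sum_apply, diagonal_apply, h, smul_ite, Finset.sum_ite_eq]
    rw [hdg, Finset.mul_sum, Finset.sum_mul]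
    refine Finset.sum_congr rfl fun i _ => ?_
    simp [hp, mul_smul_comm, smul_mul_assoc]
  have hsump : ∑ i, p i = 1 := by
    have := hdec (fun _ => 1)
    simpa [hUU] using this.symm
  have hbd : b = U * diagonal (fun j => (lam j : ℂ)) * Uᴴ := by
    exact hb.spectral_theorem
  have hbeq : b = ∑ i, (lam i : ℂ) • p i := by rw [hbd, hdec]
  have hb2 : b * b = ∑ i, ((lam i : ℂ) * (lam i : ℂ)) • p i := by
    rw [hbd]
    calc U * diagonal (fun j => (lam j : ℂ)) * Uᴴ * (U * diagonal (fun j => (lam j : ℂ)) * Uᴴ)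
        = U * (diagonal (fun j => (lam j : ℂ)) * (Uᴴ * U) * diagonal (fun j => (lam j : ℂ))) * Uᴴ := by
          noncomm_ring
      _ = U * diagonal (fun j => ((lam j * lam j : ℝ) : ℂ)) * Uᴴ := by
          rw [hUU']; simp [diagonal_mul_diagonal]
      _ = ∑ i, ((lam i : ℂ) * (lam i : ℂ)) • p i := by
          rw [hdec]; push_cast; rfl
  -- images under T
  set q : Matrix (Fin m) (Fin m) ℂ := T b with hq
  have hsumq : ∑ i, T (p i) = 1 := by
    rw [← map_sum, hsump, hunital]
  have hqsum : q = ∑ i, (lam i : ℂ) • T (p i) := by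
    rw [hq, hbeq, map_sum]; simp
  have hTb2 : T (b * b) = ∑ i, ((lam i : ℂ) * (lam i : ℂ)) • T (p i) := by
    rw [hb2, map_sum]; simp
  have hqherm : qᴴ = q := by
    rw [hqsum, conjTranspose_sum]
    refine Finset.sum_congr rfl fun i _ => ?_
    rw [conjTranspose_smul, (hpos _ (hppos i)).isHermitian.eq]
    simp
  -- the key identity
  have key : T (b * b) - q * q
      = ∑ i, ((lam i : ℂ) • 1 - q) * T (p i) * ((lam i : ℂ) • 1 - q)ᴴ := by
    have expand : ∀ i, ((lam i : ℂ) • 1 - q) * T (p i) * ((lam i : ℂ) • 1 - q)ᴴ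
        = ((lam i : ℂ) * (lam i : ℂ)) • T (p i) - (lam i : ℂ) • (T (p i) * q)
            - (lam i : ℂ) • (q * T (p i)) + q * T (p i) * q := by
      intro i
      rw [conjTranspose_sub, conjTranspose_smul, conjTranspose_one, hqherm]
      have : star ((lam i : ℝ) : ℂ) = ((lam i : ℝ) : ℂ) := by
        simp [Complex.star_def]
      rw [this]
      rw [sub_mul, sub_mul, mul_sub, mul_sub]
      simp only [smul_mul_assoc, mul_smul_comm, one_mul, mul_one, smul_smul]
      abel
    rw [Finset.sum_congr rfl fun i _ => expand i]
    rw [Finset.sum_add_distrib, Finset.sum_sub_distrib, Finset.sum_sub_distrib]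
    have e1 : ∑ i, (lam i : ℂ) • (T (p i) * q) = q * q := by
      have h' : ∑ i, (lam i : ℂ) • (T (p i) * q) = (∑ i, (lam i : ℂ) • T (p i)) * q := by
        rw [Finset.sum_mul]
        exact Finset.sum_congr rfl fun i _ => (smul_mul_assoc _ _ _).symm
      rw [h', ← hqsum]
    have e2 : ∑ i, (lam i : ℂ) • (q * T (p i)) = q * q := by
      have h' : ∑ i, (lam i : ℂ) • (q * T (p i)) = q * (∑ i, (lam i : ℂ) • T (p i)) := by
        rw [Finset.mul_sum]
        exact Finset.sum_congr rfl fun i _ => (mul_smul_comm _ _ _).symm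
      rw [h', ← hqsum]
    have e3 : ∑ i, q * T (p i) * q = q * q := by
      calc ∑ i, q * T (p i) * q = q * (∑ i, T (p i)) * q := by
            rw [Finset.mul_sum, Finset.sum_mul]
        _ = q * q := by rw [hsumq, mul_one]
    rw [e1, e2, e3, ← hTb2]
    abel
  rw [key]
  refine Finset.sum_induction _ _ (fun x y hx hy => hx.add hy) ?_ fun i _ => ?_
  · simpa using Matrix.PosSemidef.zero
  · exact (hpos _ (hppos i)).mul_mul_conjTranspose_same _

end Aux

/-- Jordan–Schwarz inequality: for every unital positive linear map
`T : L(H) → L(K)` between matrix algebras and every `a`,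
`(T(a*)T(a) + T(a)T(a*))/2 ≤ T((a*a + aa*)/2)` in the Loewner order. -/
theorem jordan_schwarz_inequality {n m : ℕ}
    (T : Matrix (Fin n) (Fin n) ℂ →ₗ[ℂ] Matrix (Fin m) (Fin m) ℂ)
    (hpos : ∀ a : Matrix (Fin n) (Fin n) ℂ, a.PosSemidef → (T a).PosSemidef)
    (hunital : T 1 = 1)
    (a : Matrix (Fin n) (Fin n) ℂ) :
    (T ((2 : ℂ)⁻¹ • (aᴴ * a + a * aᴴ))
      - (2 : ℂ)⁻¹ • (T aᴴ * T a + T a * T aᴴ)).PosSemidef := by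
  set b : Matrix (Fin n) (Fin n) ℂ := (2 : ℂ)⁻¹ • (a + aᴴ) with hbdef
  set c : Matrix (Fin n) (Fin n) ℂ := (2 * Complex.I)⁻¹ • (a - aᴴ) with hcdef
  have hIne : (2 * Complex.I : ℂ) ≠ 0 := by
    simp [Complex.I_ne_zero]
  have hbH : b.IsHermitian := by
    rw [Matrix.IsHermitian, hbdef, conjTranspose_smul, conjTranspose_add,
      conjTranspose_conjTranspose]
    simp [Complex.star_def, add_comm]
  have hcH : c.IsHermitian := by
    rw [Matrix.IsHermitian, hcdef, conjTranspose_smul, conjTranspose_sub,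
      conjTranspose_conjTranspose]
    have h2 : star (2 * Complex.I : ℂ) = -(2 * Complex.I) := by
      simp [Complex.star_def]
    have : star ((2 * Complex.I : ℂ)⁻¹) = -(2 * Complex.I : ℂ)⁻¹ := by
      rw [star_inv₀, h2, inv_neg]
    rw [this]
    simp [smul_sub]
    abel
  have ha : a = b + Complex.I • c := by
    rw [hbdef, hcdef, smul_smul]
    rw [smul_add, smul_sub]
    have h1 : (Complex.I * (2 * Complex.I)⁻¹ : ℂ) = (2 : ℂ)⁻¹ := by
      field_simp
    rw [h1]
    module
  have haH : aᴴ = b - Complex.I • c := by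
    rw [hbdef, hcdef, smul_smul]
    rw [smul_add, smul_sub]
    have h1 : (Complex.I * (2 * Complex.I)⁻¹ : ℂ) = (2 : ℂ)⁻¹ := by
      field_simp
    rw [h1]
    module
  have habc : (2 : ℂ)⁻¹ • (aᴴ * a + a * aᴴ) = b * b + c * c := by
    rw [haH, ha]
    simp only [add_mul, mul_add, sub_mul, mul_sub, smul_mul_assoc, mul_smul_comm,
      smul_add, smul_sub, smul_smul, Complex.I_mul_I]
    module
  have hTabc : (2 : ℂ)⁻¹ • (T aᴴ * T a + T a * T aᴴ) = T b * T b + T c * T c := by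
    have hTa : T a = T b + Complex.I • T c := by rw [ha]; simp
    have hTaH : T aᴴ = T b - Complex.I • T c := by rw [haH]; simp
    rw [hTa, hTaH]
    simp only [add_mul, mul_add, sub_mul, mul_sub, smul_mul_assoc, mul_smul_comm,
      smul_add, smul_sub, smul_smul, Complex.I_mul_I]
    module
  rw [habc, hTabc, map_add]
  have := (kadison_aux T hpos hunital b hbH).add (kadison_aux T hpos hunital c hcH)
  convert this using 1
  abel
end

section
/- Let T : L(H) → L(H) be a unital positive map admitting a faithful invariant state σ (i.e., tr(σ T(x)) = tr(σ x) for all x, σ positive definite). Then every fixed point a of T saturates the Jordan–Schwarz inequality: T((a*a+aa*)/2) = (T(a*)T(a)+T(a)T(a*))/2 = (a*a+aa*)/2. -/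
open Matrix ComplexOrder

namespace JSAux

variable {n : ℕ}

open scoped MatrixOrder in
lemma psd_sqrt {D : Matrix (Fin n) (Fin n) ℂ} (hD : D.PosSemidef) :
    ∃ S : Matrix (Fin n) (Fin n) ℂ, S * S = D ∧ Sᴴ = S := by
  obtain ⟨X, hX, -, h⟩ := sub_zero D ▸ CFC.exists_sqrt_of_isSelfAdjoint_of_quasispectrumRestricts
    hD.isHermitian (QuasispectrumRestricts.nnreal_of_nonneg hD.nonneg)
  exact ⟨X, by rw [h, sub_zero], hX⟩

/-- In ℂ with the complex order, `trace (Nᴴ * N) = 0` forces `N = 0`. -/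
lemma eq_zero_of_trace_conjTranspose_mul_self {N : Matrix (Fin n) (Fin n) ℂ}
    (h : (Nᴴ * N).trace = 0) : N = 0 := by
  have hsum : ∑ j, ∑ i, star (N i j) * N i j = 0 := by
    simpa [Matrix.trace, Matrix.diag, Matrix.mul_apply, Matrix.conjTranspose_apply] using h
  have h1 : ∀ j ∈ Finset.univ, (∑ i, star (N i j) * N i j) = 0 := by
    rw [← Finset.sum_eq_zero_iff_of_nonneg]
    · exact hsum
    · intro j _
      exact Finset.sum_nonneg fun i _ => star_mul_self_nonneg _
  ext i j
  have h2 : ∀ i ∈ Finset.univ, star (N i j) * N i j = 0 := by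
    rw [← Finset.sum_eq_zero_iff_of_nonneg]
    · exact h1 j (Finset.mem_univ j)
    · intro i _; exact star_mul_self_nonneg _
  have := h2 i (Finset.mem_univ i)
  simpa [CStarRing.star_mul_self_eq_zero_iff] using this

/-- Faithfulness: a PSD matrix with `tr (σ D) = 0` for positive definite `σ` vanishes. -/
lemma eq_zero_of_posSemidef_trace {σ D : Matrix (Fin n) (Fin n) ℂ}
    (hσ : σ.PosDef) (hD : D.PosSemidef) (h : (σ * D).trace = 0) : D = 0 := by
  obtain ⟨S, hSS, hSH⟩ := psd_sqrt hD
  obtain ⟨R, hRR, hRH⟩ := psd_sqrt hσ.posSemidef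
  have key : ((R * S)ᴴ * (R * S)).trace = 0 := by
    have : (R * S)ᴴ * (R * S) = S * (R * R * S) := by
      rw [conjTranspose_mul, hSH, hRH]; noncomm_ring
    rw [this, trace_mul_comm, hRR]
    calc (σ * S * S).trace = (σ * D).trace := by rw [mul_assoc, hSS]
      _ = 0 := h
  have hRS : R * S = 0 := eq_zero_of_trace_conjTranspose_mul_self key
  have hσS : σ * S = 0 := by rw [← hRR, mul_assoc, hRS, mul_zero]
  have hS0 : S = 0 := by
    have := hσ.isUnit
    have h' : σ * S = σ * 0 := by rw [hσS, mul_zero]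
    exact this.mul_left_cancel h'
  rw [← hSS, hS0, mul_zero]

lemma diagonal_eq_sum_std (d : Fin n → ℂ) :
    diagonal d = ∑ i, d i • single i i 1 := by
  ext j k
  simp only [Matrix.sum_apply, Matrix.smul_apply, Matrix.single, Matrix.diagonal,
    Matrix.of_apply, smul_eq_mul, mul_ite, mul_one, mul_zero]
  by_cases h : j = k
  · subst h; simp
  · simp [h, Finset.sum_ite_of_false, fun i (hi : i = j ∧ i = k) => h (hi.1 ▸ hi.2)]

lemma unitary_diag_sum (U : Matrix (Fin n) (Fin n) ℂ) (d : Fin n → ℂ) :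
    U * diagonal d * Uᴴ = ∑ i, d i • (U * single i i 1 * Uᴴ) := by
  rw [diagonal_eq_sum_std, Finset.mul_sum, Finset.sum_mul]
  congr 1
  ext i
  rw [mul_smul_comm, smul_mul_assoc]

lemma stdBasis_posSemidef (i : Fin n) : (single i i (1:ℂ)).PosSemidef := by
  have : single i i (1:ℂ) = diagonal (Pi.single i 1) := by
    ext j k
    simp only [Matrix.single, Matrix.diagonal, Matrix.of_apply]
    by_cases h : j = k
    · subst h; simp [Pi.single_apply, eq_comm]
    · simp only [if_neg h, ite_eq_right_iff, and_imp]
      intro h1 h2; exact absurd (h1 ▸ h2) h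
  rw [this]
  refine Matrix.PosSemidef.diagonal ?_
  intro j
  by_cases h : j = i <;> simp [Pi.single_apply, h]

lemma sum_fromBlocks {ι : Type*} (s : Finset ι)
    (A B C D : ι → Matrix (Fin n) (Fin n) ℂ) :
    ∑ i ∈ s, fromBlocks (A i) (B i) (C i) (D i)
      = fromBlocks (∑ i ∈ s, A i) (∑ i ∈ s, B i) (∑ i ∈ s, C i) (∑ i ∈ s, D i) := by
  induction s using Finset.cons_induction with
  | empty => simp [← Matrix.fromBlocks_zero]
  | cons a s ha ih => simp [Finset.sum_cons, ih, Matrix.fromBlocks_add]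

lemma blockTerm_psd {q : Matrix (Fin n) (Fin n) ℂ} (hq : q.PosSemidef) (c : ℝ) :
    (fromBlocks ((((c:ℂ))^2) • q) ((c:ℂ) • q) ((c:ℂ) • q) q).PosSemidef := by
  obtain ⟨r, hrr, hrh⟩ := psd_sqrt hq
  have key : fromBlocks ((((c:ℂ))^2) • q) ((c:ℂ) • q) ((c:ℂ) • q) q
      = (fromBlocks ((c:ℂ) • r) r 0 0)ᴴ * (fromBlocks ((c:ℂ) • r) r 0 0) := by
    rw [Matrix.fromBlocks_conjTranspose, Matrix.fromBlocks_multiply]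
    simp [hrh, hrr, smul_smul, Complex.conj_ofReal, smul_mul_assoc, mul_smul_comm, sq, ← Complex.coe_smul]
  rw [key]
  exact posSemidef_conjTranspose_mul_self _

lemma kadison (T : Matrix (Fin n) (Fin n) ℂ →ₗ[ℂ] Matrix (Fin n) (Fin n) ℂ)
    (hpos : ∀ x : Matrix (Fin n) (Fin n) ℂ, x.PosSemidef → (T x).PosSemidef)
    (hunital : T 1 = 1)
    {x : Matrix (Fin n) (Fin n) ℂ} (hx : x.IsHermitian) :
    (T x)ᴴ = T x ∧ (T (x * x) - T x * T x).PosSemidef := by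
  classical
  set U : Matrix (Fin n) (Fin n) ℂ := (hx.eigenvectorUnitary : Matrix (Fin n) (Fin n) ℂ) with hUdef
  have hUU : U * Uᴴ = 1 := by
    have := (Matrix.mem_unitaryGroup_iff).mp hx.eigenvectorUnitary.2
    simpa [Matrix.star_eq_conjTranspose] using this
  have hUU' : Uᴴ * U = 1 := by
    have := (Matrix.mem_unitaryGroup_iff').mp hx.eigenvectorUnitary.2
    simpa [Matrix.star_eq_conjTranspose] using this
  set lam := hx.eigenvalues with hlamdef
  set p : Fin n → Matrix (Fin n) (Fin n) ℂ :=
    fun i => U * single i i 1 * Uᴴ with hpdef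
  have hfun : ∀ d : Fin n → ℂ, U * diagonal d * Uᴴ = ∑ i, d i • p i :=
    fun d => unitary_diag_sum U d
  have hq : ∀ i, (T (p i)).PosSemidef :=
    fun i => hpos _ ((stdBasis_posSemidef i).mul_mul_conjTranspose_same U)
  have hqsum : ∑ i, T (p i) = 1 := by
    rw [← map_sum]
    have hsum : ∑ i, p i = 1 := by
      have h1 := (hfun (fun _ => 1)).symm
      simpa [Matrix.diagonal_one, hUU] using h1
    rw [hsum, hunital]
  have hxe : x = U * diagonal (fun i => (lam i : ℂ)) * Uᴴ := by
    have := hx.spectral_theorem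
    simpa [Matrix.star_eq_conjTranspose, Function.comp_def] using this
  have hx2 : x * x = U * diagonal (fun i => ((lam i : ℂ))^2) * Uᴴ := by
    conv_lhs => rw [hxe]
    rw [show U * diagonal (fun i => (lam i : ℂ)) * Uᴴ * (U * diagonal (fun i => (lam i : ℂ)) * Uᴴ)
        = U * (diagonal (fun i => (lam i : ℂ)) * (Uᴴ * U) * diagonal (fun i => (lam i : ℂ))) * Uᴴ by
      noncomm_ring]
    rw [hUU', mul_one, diagonal_mul_diagonal]
    congr 1
    ext i
    simp [sq]
  have hTx : T x = ∑ i, (lam i : ℂ) • T (p i) := by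
    rw [hxe, hfun, map_sum]; simp
  have hTx2 : T (x * x) = ∑ i, ((lam i : ℂ))^2 • T (p i) := by
    rw [hx2, hfun, map_sum]; simp
  have herm : (T x)ᴴ = T x := by
    rw [hTx, Matrix.conjTranspose_sum]
    refine Finset.sum_congr rfl fun i _ => ?_
    rw [Matrix.conjTranspose_smul, (hq i).isHermitian.eq]
    congr 1
    simp [RCLike.star_def, Complex.conj_ofReal]
  refine ⟨herm, ?_⟩
  have hblock : (fromBlocks (T (x*x)) (T x) ((T x)ᴴ) 1).PosSemidef := by
    have hsplit : fromBlocks (T (x*x)) (T x) ((T x)ᴴ) (1 : Matrix (Fin n) (Fin n) ℂ)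
        = ∑ i, fromBlocks (((lam i : ℂ))^2 • T (p i)) ((lam i : ℂ) • T (p i))
            ((lam i : ℂ) • T (p i)) (T (p i)) := by
      rw [sum_fromBlocks, ← hTx2, ← hTx, hqsum, herm]
    rw [hsplit]
    refine Finset.sum_induction _ _ (fun a b ha hb => ha.add hb) .zero ?_
    intro i _
    exact blockTerm_psd (hq i) (lam i)
  have inv1 : Invertible (1 : Matrix (Fin n) (Fin n) ℂ) := invertibleOne
  have := (Matrix.PosDef.fromBlocks₂₂ (T (x*x)) (T x) Matrix.PosDef.one).mp hblock
  simpa [herm, inv_one] using this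

end JSAux

open JSAux in
/-- A fixed point of a unital positive map with a faithful invariant state
saturates the Jordan–Schwarz inequality. -/
theorem fixedPoint_saturates_jordan_schwarz {n : ℕ}
    (T : Matrix (Fin n) (Fin n) ℂ →ₗ[ℂ] Matrix (Fin n) (Fin n) ℂ)
    (hpos : ∀ x : Matrix (Fin n) (Fin n) ℂ, x.PosSemidef → (T x).PosSemidef)
    (hunital : T 1 = 1)
    (σ : Matrix (Fin n) (Fin n) ℂ) (hσ : σ.PosDef) (hσtr : σ.trace = 1)
    (hinv : ∀ x : Matrix (Fin n) (Fin n) ℂ, (σ * T x).trace = (σ * x).trace)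
    (a : Matrix (Fin n) (Fin n) ℂ) (hfix : T a = a) :
    T ((2 : ℂ)⁻¹ • (aᴴ * a + a * aᴴ))
        = (2 : ℂ)⁻¹ • (T aᴴ * T a + T a * T aᴴ) ∧
      T ((2 : ℂ)⁻¹ • (aᴴ * a + a * aᴴ)) = (2 : ℂ)⁻¹ • (aᴴ * a + a * aᴴ) := by
  classical
  set X := a + aᴴ with hXdef
  set Y := Complex.I • (aᴴ - a) with hYdef
  have hXh : X.IsHermitian := by
    rw [Matrix.IsHermitian, hXdef, Matrix.conjTranspose_add, Matrix.conjTranspose_conjTranspose,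
      add_comm]
  have hYh : Y.IsHermitian := by
    rw [Matrix.IsHermitian, hYdef, Matrix.conjTranspose_smul, Matrix.conjTranspose_sub,
      Matrix.conjTranspose_conjTranspose, Complex.star_def, Complex.conj_I, neg_smul, smul_sub, smul_sub,
      neg_sub]
  have hTadj : T aᴴ = aᴴ := by
    have h1 := (kadison T hpos hunital hXh).1
    have h2 := (kadison T hpos hunital hYh).1
    have hTX : T X = a + T aᴴ := by rw [hXdef, map_add, hfix]
    have hTY : T Y = Complex.I • (T aᴴ - a) := by rw [hYdef, _root_.map_smul, map_sub, hfix]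
    rw [hTX, Matrix.conjTranspose_add] at h1
    rw [hTY, Matrix.conjTranspose_smul, Matrix.conjTranspose_sub, Complex.star_def, Complex.conj_I, neg_smul] at h2
    have h2' : (T aᴴ)ᴴ - aᴴ = -(T aᴴ - a) := by
      apply smul_right_injective _ Complex.I_ne_zero
      simp only [smul_neg]
      rw [← h2, neg_neg]
    have hsub : (T aᴴ)ᴴ = aᴴ - T aᴴ + a := by
      have h3 := eq_add_of_sub_eq h2'
      rw [h3]; abel
    rw [hsub] at h1
    have h4 : aᴴ + aᴴ - (T aᴴ + T aᴴ) = (aᴴ + (aᴴ - T aᴴ + a)) - (a + T aᴴ) := by abel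
    rw [h1, sub_self] at h4
    have h5 : (2:ℂ) • T aᴴ = (2:ℂ) • aᴴ := by
      rw [two_smul, two_smul]
      exact (sub_eq_zero.mp h4).symm
    exact smul_right_injective _ two_ne_zero h5
  have hTX2 : T X = X := by rw [hXdef, map_add, hfix, hTadj]
  have hTY2 : T Y = Y := by rw [hYdef, _root_.map_smul, map_sub, hfix, hTadj]
  have hK1 := (kadison T hpos hunital hXh).2
  rw [hTX2] at hK1
  have hK2 := (kadison T hpos hunital hYh).2
  rw [hTY2] at hK2
  set Z := aᴴ * a + a * aᴴ with hZdef
  have hXY : X * X + Y * Y = (2:ℂ) • Z := by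
    rw [hXdef, hYdef, hZdef, smul_mul_smul_comm, Complex.I_mul_I, neg_one_smul, two_smul]
    noncomm_ring
  have hD : (T (X*X) - X*X) + (T (Y*Y) - Y*Y) = 0 := by
    apply eq_zero_of_posSemidef_trace hσ (hK1.add hK2)
    have hexp : σ * ((T (X*X) - X*X) + (T (Y*Y) - Y*Y))
        = (σ * T (X*X) - σ * (X*X)) + (σ * T (Y*Y) - σ * (Y*Y)) := by noncomm_ring
    rw [hexp, Matrix.trace_add, Matrix.trace_sub, Matrix.trace_sub, hinv, hinv]
    ring
  have hTZ : T Z = Z := by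
    have h2Z : T ((2:ℂ) • Z) = (2:ℂ) • Z := by
      rw [← hXY, map_add, ← sub_eq_zero]
      have hre : T (X*X) + T (Y*Y) - (X*X + Y*Y)
          = (T (X*X) - X*X) + (T (Y*Y) - Y*Y) := by abel
      rw [hre, hD]
    apply smul_right_injective _ (two_ne_zero (α := ℂ))
    show (2:ℂ) • T Z = (2:ℂ) • Z
    rw [← _root_.map_smul, h2Z]
  constructor
  · rw [hfix, hTadj, _root_.map_smul, hTZ]
  · rw [_root_.map_smul, hTZ]
end

section
/- For any J*-algebra J on a finite-dimensional Hilbert space there exists a unique trace-preserving conditional expectation E : L(H) → J, characterized by tr(E(a) b) = tr(a b) for all b ∈ J; this E is positive. -/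
open Matrix ComplexOrder Polynomial

noncomputable def matEquiv (n : ℕ) : Matrix (Fin n) (Fin n) ℂ ≃ₗ[ℂ] EuclideanSpace ℂ (Fin n × Fin n) where
  toFun a := WithLp.toLp 2 (fun p : Fin n × Fin n => a p.1 p.2)
  invFun x := Matrix.of fun i j => x (i, j)
  map_add' _ _ := rfl
  map_smul' _ _ := rfl
  left_inv _ := rfl
  right_inv _ := rfl

lemma inner_matEquiv {n : ℕ} (a b : Matrix (Fin n) (Fin n) ℂ) :
    (inner ℂ (matEquiv n a) (matEquiv n b) : ℂ) = (aᴴ * b).trace := by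
  simp only [PiLp.inner_apply, RCLike.inner_apply, matEquiv, LinearEquiv.coe_mk,
    Matrix.trace, Matrix.diag, Matrix.mul_apply, conjTranspose_apply]
  rw [Fintype.sum_prod_type]
  rw [Finset.sum_comm]
  simp [mul_comm]
  rfl

lemma eq_zero_of_trace {n : ℕ} (a : Matrix (Fin n) (Fin n) ℂ) (h : (aᴴ * a).trace = 0) :
    a = 0 := by
  rw [← inner_matEquiv] at h
  rw [inner_self_eq_zero] at h
  simpa using congrArg (matEquiv n).symm h

lemma trace_nonneg_psd {n : ℕ} {m : Matrix (Fin n) (Fin n) ℂ} (hm : m.PosSemidef) :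
    0 ≤ m.trace := by
  exact hm.trace_nonneg

open scoped MatrixOrder in
lemma trace_mul_nonneg_psd {n : ℕ} {a b : Matrix (Fin n) (Fin n) ℂ}
    (ha : a.PosSemidef) (hb : b.PosSemidef) : 0 ≤ (a * b).trace := by
  have h1 : a * b = a * (CFC.sqrt b * CFC.sqrt b) := by rw [CFC.sqrt_mul_sqrt_self b hb.nonneg]
  rw [h1, ← mul_assoc, Matrix.trace_mul_cycle]
  have h2 : CFC.sqrt b * a * CFC.sqrt b = CFC.sqrt b * a * (CFC.sqrt b)ᴴ := by
    rw [(CFC.sqrt_nonneg b).posSemidef.isHermitian.eq]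
  rw [h2]
  exact trace_nonneg_psd (ha.mul_mul_conjTranspose_same (CFC.sqrt b))

section J
variable {n : ℕ} (J : Submodule ℂ (Matrix (Fin n) (Fin n) ℂ))
    (hone : (1 : Matrix (Fin n) (Fin n) ℂ) ∈ J)
    (hjordan : ∀ a ∈ J, ∀ b ∈ J, (2 : ℂ)⁻¹ • (a * b + b * a) ∈ J)

include hone hjordan in
lemma pow_mem_J {x : Matrix (Fin n) (Fin n) ℂ} (hx : x ∈ J) (k : ℕ) : x ^ k ∈ J := by
  induction k with
  | zero => simpa using hone
  | succ k ih =>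
    have h := hjordan x hx (x ^ k) ih
    have : (2 : ℂ)⁻¹ • (x * x ^ k + x ^ k * x) = x ^ (k + 1) := by
      rw [← pow_succ, ← pow_succ']
      rw [← two_smul ℂ (x ^ (k+1)), smul_smul]
      norm_num
    rwa [this] at h

include hone hjordan in
lemma aeval_mem_J {x : Matrix (Fin n) (Fin n) ℂ} (hx : x ∈ J) (p : ℂ[X]) :
    Polynomial.aeval x p ∈ J := by
  rw [Polynomial.aeval_eq_sum_range]
  exact Submodule.sum_mem J fun i _ => Submodule.smul_mem J _ (pow_mem_J J hone hjordan hx i)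
end J

lemma selfdual {n : ℕ} (J : Submodule ℂ (Matrix (Fin n) (Fin n) ℂ))
    (hone : (1 : Matrix (Fin n) (Fin n) ℂ) ∈ J)
    (hjordan : ∀ a ∈ J, ∀ b ∈ J, (2 : ℂ)⁻¹ • (a * b + b * a) ∈ J)
    {x : Matrix (Fin n) (Fin n) ℂ} (hx : x ∈ J) (hxh : x.IsHermitian)
    (hpos : ∀ b ∈ J, b.PosSemidef → 0 ≤ (x * b).trace) : x.PosSemidef := by
  classical
  set U : Matrix (Fin n) (Fin n) ℂ := ↑(hxh.eigenvectorUnitary) with hUdef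
  set μ : Fin n → ℝ := hxh.eigenvalues with hμdef
  have hU1 : U * star U = 1 := Matrix.mem_unitaryGroup_iff.mp hxh.eigenvectorUnitary.2
  have hU2 : star U * U = 1 := Matrix.mem_unitaryGroup_iff'.mp hxh.eigenvectorUnitary.2
  have hspec : x = U * Matrix.diagonal (fun i => (μ i : ℂ)) * star U := hxh.spectral_theorem
  set ν : Fin n → ℝ := fun i => max (-(μ i)) 0 with hνdef
  -- the interpolation polynomial
  set s : Finset ℂ := Finset.image (fun i => (μ i : ℂ)) Finset.univ with hsdef
  set p : ℂ[X] := Lagrange.interpolate s id (fun z => ((max (-z.re) 0 : ℝ) : ℂ)) with hpdef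
  have hp : ∀ i, p.eval ((μ i : ℂ)) = (ν i : ℂ) := by
    intro i
    have hi : (μ i : ℂ) ∈ s := Finset.mem_image_of_mem _ (Finset.mem_univ i)
    have := Lagrange.eval_interpolate_at_node (v := id)
      (r := fun z => ((max (-z.re) 0 : ℝ) : ℂ)) (Set.injOn_id _) hi
    simpa [hνdef, hpdef] using this
  -- conjugation algebra homomorphism
  set φ : Matrix (Fin n) (Fin n) ℂ →ₐ[ℂ] Matrix (Fin n) (Fin n) ℂ :=
    { toFun := fun M => U * M * star U
      map_one' := by show U * 1 * star U = 1; rw [mul_one]; exact hU1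
      map_mul' := fun A B => by
        show U * (A * B) * star U = (U * A * star U) * (U * B * star U)
        simp only [mul_assoc]
        rw [← mul_assoc (star U) U, hU2, one_mul]
      map_zero' := by simp
      map_add' := fun A B => by simp [mul_add, add_mul]
      commutes' := fun c => by
        simp only [Algebra.algebraMap_eq_smul_one]
        rw [mul_smul_comm, mul_one, smul_mul_assoc, hU1] } with hφdef
  set y : Matrix (Fin n) (Fin n) ℂ := U * Matrix.diagonal (fun i => (ν i : ℂ)) * star U
    with hydef
  have hy_eval : Polynomial.aeval x p = y := by
    have hxφ : x = φ (Matrix.diagonal (fun i => (μ i : ℂ))) := hspec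
    rw [hxφ, Polynomial.aeval_algHom_apply]
    have hdiag : Polynomial.aeval (Matrix.diagonal (fun i => (μ i : ℂ))) p
        = Matrix.diagonal (fun i => (ν i : ℂ)) := by
      have h1 : Matrix.diagonal (fun i => (μ i : ℂ))
          = Matrix.diagonalAlgHom ℂ (fun i => (μ i : ℂ)) := rfl
      rw [h1, Polynomial.aeval_algHom_apply]
      have h2 : Polynomial.aeval (fun i => (μ i : ℂ)) p = fun i => (ν i : ℂ) := by
        funext i
        have h3 : (Polynomial.aeval (fun j => ((μ j : ℝ) : ℂ)) p) i
            = Polynomial.aeval ((μ i : ℝ) : ℂ) p :=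
          (Polynomial.aeval_algHom_apply (Pi.evalAlgHom ℂ (fun _ => ℂ) i) _ p).symm
        rw [h3, Polynomial.coe_aeval_eq_eval]
        exact hp i
      rw [h2]
      rfl
    rw [hdiag]
    rfl
  have hy_mem : y ∈ J := hy_eval ▸ aeval_mem_J J hone hjordan hx p
  have hν_nonneg : ∀ i, (0:ℝ) ≤ ν i := fun i => le_max_right _ _
  have hy_psd : y.PosSemidef := by
    have hd : (Matrix.diagonal (fun i => (ν i : ℂ))).PosSemidef :=
      Matrix.PosSemidef.diagonal fun i => Complex.zero_le_real.mpr (hν_nonneg i)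
    have h := hd.mul_mul_conjTranspose_same U
    rw [hydef, Matrix.star_eq_conjTranspose]
    exact h
  have hxy : (x * y).trace = ((∑ i, μ i * ν i : ℝ) : ℂ) := by
    rw [hspec, hydef]
    have hmm : (U * Matrix.diagonal (fun i => (μ i : ℂ)) * star U)
        * (U * Matrix.diagonal (fun i => (ν i : ℂ)) * star U)
        = U * (Matrix.diagonal (fun i => (μ i : ℂ))
            * Matrix.diagonal (fun i => (ν i : ℂ))) * star U := by
      simp only [mul_assoc]
      rw [← mul_assoc (star U) U, hU2, one_mul]
    rw [hmm, Matrix.trace_mul_cycle, ← mul_assoc, hU2, one_mul,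
      Matrix.diagonal_mul_diagonal, Matrix.trace_diagonal]
    push_cast
    rfl
  have h0 : (0:ℂ) ≤ ((∑ i, μ i * ν i : ℝ) : ℂ) := hxy ▸ hpos y hy_mem hy_psd
  rw [Complex.zero_le_real] at h0
  have hμν : ∀ i, μ i * ν i = -(ν i ^ 2) := by
    intro i
    rcases le_or_gt 0 (μ i) with h | h
    · have hz : ν i = 0 := max_eq_right (by linarith)
      rw [hz]; ring
    · have hz : ν i = -μ i := max_eq_left (by linarith)
      rw [hz]; ring
  have hsum : ∑ i, ν i ^ 2 ≤ 0 := by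
    have h1 : ∑ i, μ i * ν i = -∑ i, ν i ^ 2 := by
      rw [← Finset.sum_neg_distrib]
      exact Finset.sum_congr rfl fun i _ => hμν i
    linarith
  have hν0 : ∀ i, ν i = 0 := by
    have h2 : ∑ i, ν i ^ 2 = 0 :=
      le_antisymm hsum (Finset.sum_nonneg fun i _ => sq_nonneg _)
    intro i
    have := (Finset.sum_eq_zero_iff_of_nonneg (fun i _ => sq_nonneg (ν i))).mp h2 i
      (Finset.mem_univ i)
    exact pow_eq_zero_iff (by norm_num) |>.mp this
  apply hxh.posSemidef_iff_eigenvalues_nonneg.mpr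
  intro i
  have h3 := le_max_left (-μ i) 0
  have h4 := hν0 i
  rw [hνdef] at h4
  simp only [h4] at h3
  simpa [hμdef] using h3


/-- Existence and uniqueness of the trace-preserving conditional expectation
onto a J*-algebra `J`: it is the unique unital positive linear idempotent
map onto `J` that is trace-preserving, and it is characterized by
`tr (E a * b) = tr (a * b)` for all `b ∈ J`. -/
theorem exists_unique_tpce {n : ℕ}
    (J : Submodule ℂ (Matrix (Fin n) (Fin n) ℂ))
    (hone : (1 : Matrix (Fin n) (Fin n) ℂ) ∈ J)
    (hstar : ∀ a ∈ J, aᴴ ∈ J)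
    (hjordan : ∀ a ∈ J, ∀ b ∈ J, (2 : ℂ)⁻¹ • (a * b + b * a) ∈ J) :
    ∃! E : Matrix (Fin n) (Fin n) ℂ →ₗ[ℂ] Matrix (Fin n) (Fin n) ℂ,
      (∀ a, E a ∈ J) ∧ (∀ a ∈ J, E a = a) ∧
      (∀ a : Matrix (Fin n) (Fin n) ℂ, a.PosSemidef → (E a).PosSemidef) ∧
      (∀ a : Matrix (Fin n) (Fin n) ℂ, (E a).trace = a.trace) ∧
      (∀ a : Matrix (Fin n) (Fin n) ℂ, ∀ b ∈ J, (E a * b).trace = (a * b).trace) := by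
  classical
  set e := matEquiv n with he
  set K : Submodule ℂ (EuclideanSpace ℂ (Fin n × Fin n)) := J.map e.toLinearMap with hKdef
  set E : Matrix (Fin n) (Fin n) ℂ →ₗ[ℂ] Matrix (Fin n) (Fin n) ℂ :=
    e.symm.toLinearMap ∘ₗ (K.subtype ∘ₗ (K.orthogonalProjectionOnto).toLinearMap) ∘ₗ
      e.toLinearMap with hEdef
  have hEapp : ∀ a, e (E a) = ↑(K.orthogonalProjectionOnto (e a)) := by
    intro a
    simp [hEdef]
  have hmemE : ∀ a, E a ∈ J := by
    intro a
    have h1 : (↑(K.orthogonalProjectionOnto (e a)) : EuclideanSpace ℂ (Fin n × Fin n)) ∈ K :=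
      (K.orthogonalProjectionOnto (e a)).2
    replace h1 : _ ∈ J.map e.toLinearMap := h1
    obtain ⟨m, hm, hme⟩ := h1
    have : E a = m := by
      apply e.injective
      rw [hEapp a, ← hme]
      rfl
    rwa [this]
  have hfix : ∀ a ∈ J, E a = a := by
    intro a ha
    apply e.injective
    rw [hEapp a]
    rw [← Submodule.starProjection_apply]
    exact Submodule.starProjection_eq_self_iff.mpr ⟨a, ha, rfl⟩
  -- characterizing orthogonality
  have hchar0 : ∀ a, ∀ c ∈ J, ((a - E a)ᴴ * c).trace = 0 := by
    intro a c hc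
    rw [← inner_matEquiv]
    have h1 : matEquiv n (a - E a) = e a - ↑(K.orthogonalProjectionOnto (e a)) := by
      rw [map_sub, hEapp a]
    rw [h1, ← Submodule.starProjection_apply]
    exact Submodule.starProjection_inner_eq_zero (e a) (e c) ⟨c, hc, rfl⟩
  have hchar1 : ∀ a, ∀ c ∈ J, ((a - E a) * c).trace = 0 := by
    intro a c hc
    have h1 := hchar0 a cᴴ (hstar c hc)
    have h2 : ((a - E a)ᴴ * cᴴ)ᴴ = c * (a - E a) := by
      rw [Matrix.conjTranspose_mul, Matrix.conjTranspose_conjTranspose,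
        Matrix.conjTranspose_conjTranspose]
    have h3 := congrArg star h1
    rw [← Matrix.trace_conjTranspose, h2, star_zero] at h3
    rw [Matrix.trace_mul_comm]
    exact h3
  have hchar : ∀ a, ∀ b ∈ J, (E a * b).trace = (a * b).trace := by
    intro a b hb
    have := hchar1 a b hb
    rw [Matrix.sub_mul, Matrix.trace_sub, sub_eq_zero] at this
    exact this.symm
  -- uniqueness of the element with the characterizing property
  have huniq : ∀ (a y : Matrix (Fin n) (Fin n) ℂ), y ∈ J →
      (∀ c ∈ J, ((a - y) * c).trace = 0) → y = E a := by
    intro a y hy hchar'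
    have hd : y - E a ∈ J := Submodule.sub_mem J hy (hmemE a)
    have hdc : ∀ c ∈ J, ((y - E a) * c).trace = 0 := by
      intro c hc
      have h1 := hchar1 a c hc
      have h2 := hchar' c hc
      have h3 : y - E a = (a - E a) - (a - y) := by abel
      rw [h3, Matrix.sub_mul, Matrix.trace_sub, h1, h2, sub_zero]
    have h4 := hdc (y - E a)ᴴ (hstar _ hd)
    have h5 : ((y - E a) * (y - E a)ᴴ).trace = 0 := h4
    have h6 : (((y - E a)ᴴ)ᴴ * (y - E a)ᴴ).trace = 0 := by
      rwa [Matrix.conjTranspose_conjTranspose]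
    have := eq_zero_of_trace _ h6
    have h7 : y - E a = 0 := by
      have := congrArg Matrix.conjTranspose this
      rwa [Matrix.conjTranspose_conjTranspose, Matrix.conjTranspose_zero] at this
    rw [sub_eq_zero] at h7
    exact h7
  -- star compatibility
  have hstarE : ∀ a, E aᴴ = (E a)ᴴ := by
    intro a
    refine (huniq aᴴ (E a)ᴴ (hstar _ (hmemE a)) ?_).symm
    intro c hc
    have h1 : aᴴ - (E a)ᴴ = (a - E a)ᴴ := (Matrix.conjTranspose_sub _ _).symm
    rw [h1]
    exact hchar0 a c hc
  -- positivity
  have hpos : ∀ a : Matrix (Fin n) (Fin n) ℂ, a.PosSemidef → (E a).PosSemidef := by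
    intro a ha
    have hherm : (E a).IsHermitian := by
      have h1 := hstarE a
      rw [ha.isHermitian.eq] at h1
      exact h1.symm
    refine selfdual J hone hjordan (hmemE a) hherm ?_
    intro b hb hbpsd
    rw [hchar a b hb]
    exact trace_mul_nonneg_psd ha hbpsd
  have htrace : ∀ a : Matrix (Fin n) (Fin n) ℂ, (E a).trace = a.trace := by
    intro a
    have := hchar a 1 hone
    rwa [mul_one, mul_one] at this
  refine ⟨E, ⟨hmemE, hfix, hpos, htrace, hchar⟩, ?_⟩
  intro E' ⟨hmemE', _, _, _, hchar'⟩
  apply LinearMap.ext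
  intro a
  refine huniq a (E' a) (hmemE' a) ?_
  intro c hc
  have h1 := hchar' a c hc
  rw [Matrix.sub_mul, Matrix.trace_sub, sub_eq_zero]
  exact h1.symm
end

section
/- A unital, adjoint-preserving linear bijection T between J*-algebras that maps the positive cone onto the positive cone (an order isomorphism) is a Jordan isomorphism: T(a∘b) = T(a)∘T(b) for all a, b. -/
open Matrix ComplexOrder

section JAuxSection
open Polynomial

namespace JAux
variable {k : ℕ}
local notation "M" k => Matrix (Fin k) (Fin k) ℂ


lemma ext_mulVec {A B : M k} (h : ∀ v, A *ᵥ v = B *ᵥ v) : A = B := by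
  ext i j
  have := congrFun (h (Pi.single j 1)) i
  simpa [mulVec_single] using this

lemma proj_psd {p : M k} (hh : pᴴ = p) (hi : p * p = p) : p.PosSemidef := by
  have : p = pᴴ * p := by rw [hh, hi]
  rw [this]; exact posSemidef_conjTranspose_mul_self p

lemma nonneg_add_zero {a b : ℂ} (ha : 0 ≤ a) (hb : 0 ≤ b) (hab : a + b = 0) : a = 0 := by
  have : a = -b := by linear_combination hab
  exact le_antisymm (this ▸ neg_nonpos.mpr hb) ha

lemma extreme {p u v : M k} (hh : pᴴ = p) (hi : p * p = p)
    (hu : u.PosSemidef) (hu1 : (1 - u).PosSemidef)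
    (hv : v.PosSemidef) (hv1 : (1 - v).PosSemidef)
    (hsum : u + v = (2:ℂ) • p) : u = p := by
  apply ext_mulVec; intro x
  set y := p *ᵥ x with hy
  have hpy : p *ᵥ y = y := by rw [hy, mulVec_mulVec, hi]
  have h1uy : (1 - u) *ᵥ y = 0 := by
    have key : star y ⬝ᵥ ((1 - u) *ᵥ y) + star y ⬝ᵥ ((1 - v) *ᵥ y) = 0 := by
      have hs2 : (1 - u) + (1 - v) = (2:ℂ) • (1 - p) := by
        rw [show (1-u)+(1-v) = (1:M k) + 1 - (u+v) by abel, hsum]; module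
      rw [← dotProduct_add, ← add_mulVec, hs2, smul_mulVec, sub_mulVec, one_mulVec,
        hpy, sub_self, smul_zero, dotProduct_zero]
    exact (hu1.dotProduct_mulVec_zero_iff y).mp
      (nonneg_add_zero (hu1.dotProduct_mulVec_nonneg y) (hv1.dotProduct_mulVec_nonneg y) key)
  have huz : u *ᵥ (x - y) = 0 := by
    have hpz : p *ᵥ (x - y) = 0 := by rw [mulVec_sub, hpy, hy, sub_self]
    have key : star (x-y) ⬝ᵥ (u *ᵥ (x-y)) + star (x-y) ⬝ᵥ (v *ᵥ (x-y)) = 0 := by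
      rw [← dotProduct_add, ← add_mulVec, hsum, smul_mulVec, hpz, smul_zero,
        dotProduct_zero]
    exact (hu.dotProduct_mulVec_zero_iff _).mp
      (nonneg_add_zero (hu.dotProduct_mulVec_nonneg _) (hv.dotProduct_mulVec_nonneg _) key)
  have huy : u *ᵥ y = y := by
    have := h1uy; rw [sub_mulVec, one_mulVec, sub_eq_zero] at this; exact this.symm
  calc u *ᵥ x = u *ᵥ (y + (x - y)) := by rw [add_sub_cancel]
    _ = u *ᵥ y + u *ᵥ (x - y) := by rw [mulVec_add]
    _ = y := by rw [huy, huz, add_zero]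
    _ = p *ᵥ x := hy

lemma orth {q s : M k} (hqh : qᴴ = q) (hqi : q * q = q) (hsi : s * s = s)
    (hps : (1 - q - s).PosSemidef) : q * s = 0 := by
  apply ext_mulVec; intro x
  set y := s *ᵥ x with hy
  have hsy : s *ᵥ y = y := by rw [hy, mulVec_mulVec, hsi]
  have h1 : star y ⬝ᵥ ((1 - q - s) *ᵥ y) = - (star y ⬝ᵥ (q *ᵥ y)) := by
    rw [sub_mulVec, sub_mulVec, one_mulVec, hsy, dotProduct_sub, dotProduct_sub]
    ring
  have h4 : star y ⬝ᵥ (q *ᵥ y) = 0 := by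
    have h2 := hps.dotProduct_mulVec_nonneg y
    rw [h1] at h2
    exact le_antisymm (neg_nonneg.mp h2) ((proj_psd hqh hqi).dotProduct_mulVec_nonneg y)
  have := ((proj_psd hqh hqi).dotProduct_mulVec_zero_iff y).mp h4
  rw [← mulVec_mulVec] at *
  rw [zero_mulVec, ← hy]
  exact this

lemma interval_sq {q : M k} (hq : q.PosSemidef) (hq1 : (1 - q).PosSemidef) :
    (q - q * q).PosSemidef := by
  obtain ⟨s0, hs0, h1⟩ : ∃ s0 : M k, s0ᴴ = s0 ∧ s0 * s0 = q := by
    open scoped MatrixOrder in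
    exact ⟨CFC.sqrt q, (CFC.sqrt_nonneg q).posSemidef.isHermitian, CFC.sqrt_mul_sqrt_self q hq.nonneg⟩
  have h3 := hq1.conjTranspose_mul_mul_same s0
  have h4 : s0ᴴ * (1 - q) * s0 = q - q * q := by
    rw [hs0, mul_sub, mul_one, sub_mul, h1, ← h1]
    simp [mul_assoc]
  rwa [h4] at h3



noncomputable def conjAlgHom (U : M k) (hU : U * Uᴴ = 1) (hU' : Uᴴ * U = 1) :
    (M k) →ₐ[ℂ] (M k) where
  toFun A := U * A * Uᴴ
  map_one' := by show U * 1 * Uᴴ = 1; rw [mul_one, hU]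
  map_mul' A B := by
    simp only [mul_assoc]
    rw [show Uᴴ * (U * (B * Uᴴ)) = B * Uᴴ by rw [← mul_assoc, hU', one_mul]]
  map_zero' := by simp
  map_add' A B := by noncomm_ring
  commutes' r := by
    simp only [Algebra.algebraMap_eq_smul_one, Matrix.mul_smul, Matrix.smul_mul,
      mul_one, hU]

lemma aeval_conj (U : M k) (hU : U * Uᴴ = 1) (hU' : Uᴴ * U = 1) (D : M k) (f : ℂ[X]) :
    aeval (U * D * Uᴴ) f = U * aeval D f * Uᴴ :=
  aeval_algHom_apply (conjAlgHom U hU hU') D f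

lemma aeval_diagonal (d : Fin k → ℂ) (f : ℂ[X]) :
    aeval (diagonal d) f = diagonal (fun i => f.eval (d i)) := by
  have h := aeval_algHom_apply (diagonalAlgHom (n := Fin k) ℂ (α := ℂ)) d f
  rw [show diagonalAlgHom (n := Fin k) ℂ (α := ℂ) d = diagonal d from rfl] at h
  have h3 : (aeval d f : Fin k → ℂ) = fun i => eval (d i) f := by
    funext i
    have h2 := aeval_algHom_apply (Pi.evalAlgHom ℂ (fun _ : Fin k => ℂ) i) d f
    simp only [Pi.evalAlgHom_apply] at h2
    rw [← h2]
    exact congrFun (coe_aeval_eq_eval (d i)) f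
  rw [h, diagonalAlgHom_apply, h3]

lemma pow_mem {J : Submodule ℂ (M k)} (hone : (1 : M k) ∈ J)
    (hjordan : ∀ a ∈ J, ∀ b ∈ J, (2:ℂ)⁻¹ • (a * b + b * a) ∈ J)
    {a : M k} (ha : a ∈ J) : ∀ t : ℕ, a ^ t ∈ J := by
  intro t; induction t with
  | zero => simpa using hone
  | succ t ih =>
      have h := hjordan a ha (a ^ t) ih
      have heq : (2:ℂ)⁻¹ • (a * a ^ t + a ^ t * a) = a ^ (t + 1) := by
        rw [← pow_succ', ← pow_succ, ← two_smul ℂ (a ^ (t+1)), smul_smul]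
        norm_num
      rwa [heq] at h

lemma aeval_mem {J : Submodule ℂ (M k)} (hone : (1 : M k) ∈ J)
    (hjordan : ∀ a ∈ J, ∀ b ∈ J, (2:ℂ)⁻¹ • (a * b + b * a) ∈ J)
    {a : M k} (ha : a ∈ J) (f : ℂ[X]) : aeval a f ∈ J := by
  induction f using Polynomial.induction_on' with
  | add p q hp hq => rw [map_add]; exact J.add_mem hp hq
  | monomial t c =>
      rw [aeval_monomial, ← Algebra.smul_def]
      exact J.smul_mem c (pow_mem hone hjordan ha t)

lemma sq_of_orth {s : Finset ℂ} {Q : ℂ → M k}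
    (hid : ∀ μ ∈ s, Q μ * Q μ = Q μ)
    (horth : ∀ μ ∈ s, ∀ ν ∈ s, μ ≠ ν → Q μ * Q ν = 0) :
    (∑ μ ∈ s, μ • Q μ) * (∑ μ ∈ s, μ • Q μ) = ∑ μ ∈ s, (μ * μ) • Q μ := by
  rw [Finset.sum_mul]
  refine Finset.sum_congr rfl fun μ hμ => ?_
  rw [Finset.mul_sum]
  rw [Finset.sum_eq_single μ]
  · rw [smul_mul_assoc, mul_smul_comm, hid μ hμ, smul_smul]
  · intro ν hν hne
    simp [smul_mul_assoc, mul_smul_comm, horth μ hμ ν hν (fun h => hne h.symm)]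
  · intro h; exact absurd hμ h

lemma square_decomp {x : M k} (hx : x.IsHermitian) :
    ∃ (s : Finset ℂ) (P : ℂ → M k),
      (∀ μ ∈ s, (P μ)ᴴ = P μ) ∧ (∀ μ ∈ s, P μ * P μ = P μ) ∧
      (∀ μ ∈ s, ∀ ν ∈ s, μ ≠ ν → P μ * P ν = 0) ∧
      (∑ μ ∈ s, P μ = 1) ∧ (x = ∑ μ ∈ s, μ • P μ) ∧
      (∀ μ ∈ s, ∃ f : ℂ[X], aeval x f = P μ) := by
  set U : M k := (IsHermitian.eigenvectorUnitary hx : M k) with hUdef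
  have hU : U * Uᴴ = 1 := by
    rw [← star_eq_conjTranspose]
    exact Matrix.mem_unitaryGroup_iff.mp (IsHermitian.eigenvectorUnitary hx).2
  have hU' : Uᴴ * U = 1 := by
    rw [← star_eq_conjTranspose]
    exact Matrix.mem_unitaryGroup_iff'.mp (IsHermitian.eigenvectorUnitary hx).2
  set c : Fin k → ℂ := fun i => (RCLike.ofReal (hx.eigenvalues i) : ℂ) with hc
  have hxspec : x = U * diagonal c * Uᴴ := by
    rw [← star_eq_conjTranspose]
    exact hx.spectral_theorem
  set s : Finset ℂ := Finset.image c Finset.univ with hs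
  have hcs : ∀ i, c i ∈ s := fun i => Finset.mem_image.mpr ⟨i, Finset.mem_univ i, rfl⟩
  set P : ℂ → M k := fun μ => U * diagonal (fun i => if c i = μ then 1 else 0) * Uᴴ with hP
  have hprod : ∀ d e : Fin k → ℂ,
      (U * diagonal d * Uᴴ) * (U * diagonal e * Uᴴ) = U * diagonal (fun i => d i * e i) * Uᴴ := by
    intro d e
    simp only [mul_assoc]
    rw [show Uᴴ * (U * (diagonal e * Uᴴ)) = diagonal e * Uᴴ by rw [← mul_assoc, hU', one_mul],
      ← mul_assoc (diagonal d), diagonal_mul_diagonal]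
  have hsum0 : ∀ F : ℂ → (Fin k → ℂ),
      (∑ μ ∈ s, U * diagonal (F μ) * Uᴴ) = U * diagonal (fun i => ∑ μ ∈ s, F μ i) * Uᴴ := by
    intro F
    rw [← Finset.sum_mul, ← Finset.mul_sum]
    congr 2
    ext i j
    by_cases hij : i = j <;> simp [Matrix.sum_apply, diagonal_apply, hij]
  refine ⟨s, P, ?_, ?_, ?_, ?_, ?_, ?_⟩
  · intro μ hμ
    simp only [hP, conjTranspose_mul, conjTranspose_conjTranspose, diagonal_conjTranspose]
    rw [show (star fun i => if c i = μ then (1:ℂ) else 0) = fun i => if c i = μ then (1:ℂ) else 0 by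
      funext i; simp [Pi.star_apply, apply_ite star]]
    rw [mul_assoc]
  · intro μ hμ
    rw [hP]
    simp only []
    rw [hprod]
    have hfun : (fun i => (if c i = μ then (1:ℂ) else 0) * (if c i = μ then (1:ℂ) else 0))
        = fun i => if c i = μ then (1:ℂ) else 0 := by
      funext i; by_cases h : c i = μ <;> simp [h]
    rw [hfun]
  · intro μ hμ ν hν hne
    rw [hP]
    simp only []
    rw [hprod]
    have hfun : (fun i => (if c i = μ then (1:ℂ) else 0) * (if c i = ν then (1:ℂ) else 0))
        = fun _ => (0:ℂ) := by
      funext i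
      by_cases h : c i = μ
      · rw [if_pos h, if_neg (by rw [h]; exact hne), mul_zero]
      · rw [if_neg h, zero_mul]
    rw [hfun]
    simp
  · rw [hP]
    simp only []
    rw [hsum0]
    rw [show (fun i => ∑ μ ∈ s, if c i = μ then (1:ℂ) else 0) = fun _ => (1:ℂ) by
      funext i
      rw [Finset.sum_ite_eq s (c i) (fun _ => (1:ℂ))]
      simp [hcs i]]
    rw [show (diagonal (fun _ => (1:ℂ)) : M k) = 1 from diagonal_one, mul_one, hU]
  · have hterm : ∀ μ ∈ s, μ • P μ = U * diagonal (fun i => if c i = μ then μ else 0) * Uᴴ := by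
      intro μ hμ
      rw [hP]
      simp only []
      have h1 : μ • ((U * diagonal fun i => if c i = μ then (1:ℂ) else 0) * Uᴴ)
          = (U * (μ • diagonal fun i => if c i = μ then (1:ℂ) else 0)) * Uᴴ := by
        rw [Matrix.mul_smul, Matrix.smul_mul]
      rw [h1]
      have h2 : (μ • diagonal fun i => if c i = μ then (1:ℂ) else 0 : M k)
          = diagonal (fun i => if c i = μ then μ else 0) := by
        ext i j
        by_cases hij : i = j <;> by_cases h : c i = μ <;>
          simp [diagonal_apply, hij, h]
      rw [h2]
    rw [Finset.sum_congr rfl hterm, hsum0]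
    rw [show (fun i => ∑ μ ∈ s, if c i = μ then μ else 0) = c by
      funext i
      rw [Finset.sum_ite_eq s (c i) (fun μ => μ)]
      simp [hcs i]]
    exact hxspec
  · intro μ hμ
    refine ⟨Lagrange.interpolate s id (fun z => if z = μ then 1 else 0), ?_⟩
    rw [hxspec, aeval_conj U hU hU', aeval_diagonal, hP]
    simp only []
    have heval : (fun i => eval (c i) (Lagrange.interpolate s id (fun z => if z = μ then 1 else 0)))
        = fun i => if c i = μ then (1:ℂ) else 0 := by
      funext i
      exact Lagrange.eval_interpolate_at_node (r := fun z => if z = μ then 1 else 0)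
        (Set.injOn_id _) (hcs i)
    rw [heval]


lemma expand_mul {A : Type*} [Ring A] [Algebra ℂ A] (x y z w : A) :
    (x + Complex.I • y) * (z + Complex.I • w) + (z + Complex.I • w) * (x + Complex.I • y)
      = (x*z + z*x) + Complex.I • (x*w + w*x) + Complex.I • (y*z + z*y) - (y*w + w*y) := by
  simp only [mul_add, add_mul, smul_add, mul_smul_comm, smul_mul_assoc, smul_smul,
    Complex.I_mul_I, neg_smul, one_smul, neg_one_smul]
  abel

end JAux

end JAuxSection

/-- A unital, adjoint-preserving linear bijection between J*-algebras that
maps the positive cone onto the positive cone is a Jordan isomorphism. -/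
theorem order_iso_is_jordan_iso {n m : ℕ}
    (J₁ : Submodule ℂ (Matrix (Fin n) (Fin n) ℂ))
    (J₂ : Submodule ℂ (Matrix (Fin m) (Fin m) ℂ))
    (hone₁ : (1 : Matrix (Fin n) (Fin n) ℂ) ∈ J₁)
    (hstar₁ : ∀ a ∈ J₁, aᴴ ∈ J₁)
    (hjordan₁ : ∀ a ∈ J₁, ∀ b ∈ J₁, (2 : ℂ)⁻¹ • (a * b + b * a) ∈ J₁)
    (hone₂ : (1 : Matrix (Fin m) (Fin m) ℂ) ∈ J₂)
    (hstar₂ : ∀ a ∈ J₂, aᴴ ∈ J₂)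
    (hjordan₂ : ∀ a ∈ J₂, ∀ b ∈ J₂, (2 : ℂ)⁻¹ • (a * b + b * a) ∈ J₂)
    (T : Matrix (Fin n) (Fin n) ℂ →ₗ[ℂ] Matrix (Fin m) (Fin m) ℂ)
    (hmaps : ∀ a ∈ J₁, T a ∈ J₂)
    (hinj : ∀ a ∈ J₁, ∀ b ∈ J₁, T a = T b → a = b)
    (hsurj : ∀ b ∈ J₂, ∃ a ∈ J₁, T a = b)
    (hunital : T 1 = 1)
    (hstarT : ∀ a ∈ J₁, T aᴴ = (T a)ᴴ)
    (hposT : ∀ a ∈ J₁, a.PosSemidef → (T a).PosSemidef)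
    (hposTinv : ∀ b ∈ J₂, b.PosSemidef → ∃ a ∈ J₁, a.PosSemidef ∧ T a = b) :
    ∀ a ∈ J₁, ∀ b ∈ J₁,
      T ((2 : ℂ)⁻¹ • (a * b + b * a)) = (2 : ℂ)⁻¹ • (T a * T b + T b * T a) := by
  -- T reflects positivity
  have hrefl : ∀ w ∈ J₁, (T w).PosSemidef → w.PosSemidef := by
    intro w hw hpw
    obtain ⟨a, haJ, hapsd, hTa⟩ := hposTinv (T w) (hmaps w hw) hpw
    have := hinj a haJ w hw hTa
    rwa [← this]
  -- T preserves squares of hermitian elements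
  have hsq : ∀ x ∈ J₁, xᴴ = x → T (x * x) = T x * T x := by
    intro x hxJ hxH
    obtain ⟨s, P, hPh, hPi, hPo, hPsum, hxP, hPpoly⟩ := JAux.square_decomp (x := x) hxH
    have hPJ : ∀ μ ∈ s, P μ ∈ J₁ := by
      intro μ hμ
      obtain ⟨f, hf⟩ := hPpoly μ hμ
      exact hf ▸ JAux.aeval_mem hone₁ hjordan₁ hxJ f
    have hPpsd : ∀ μ ∈ s, (P μ).PosSemidef := fun μ hμ => JAux.proj_psd (hPh μ hμ) (hPi μ hμ)
    have h1P : ∀ μ ∈ s, ((1 : Matrix (Fin n) (Fin n) ℂ) - P μ) ∈ J₁ :=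
      fun μ hμ => J₁.sub_mem hone₁ (hPJ μ hμ)
    have h1Ppsd : ∀ μ ∈ s, ((1 : Matrix (Fin n) (Fin n) ℂ) - P μ).PosSemidef := by
      intro μ hμ
      apply JAux.proj_psd
      · rw [conjTranspose_sub, conjTranspose_one, hPh μ hμ]
      · calc (1 - P μ) * (1 - P μ) = 1 - P μ - P μ + P μ * P μ := by noncomm_ring
          _ = 1 - P μ := by rw [hPi μ hμ]; abel
    have hQJ : ∀ μ ∈ s, T (P μ) ∈ J₂ := fun μ hμ => hmaps _ (hPJ μ hμ)
    have hQh : ∀ μ ∈ s, (T (P μ))ᴴ = T (P μ) := by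
      intro μ hμ; rw [← hstarT _ (hPJ μ hμ), hPh μ hμ]
    have hQpsd : ∀ μ ∈ s, (T (P μ)).PosSemidef := fun μ hμ => hposT _ (hPJ μ hμ) (hPpsd μ hμ)
    have hQ1psd : ∀ μ ∈ s, (1 - T (P μ)).PosSemidef := by
      intro μ hμ
      have := hposT _ (h1P μ hμ) (h1Ppsd μ hμ)
      rwa [map_sub, hunital] at this
    have hQi : ∀ μ ∈ s, T (P μ) * T (P μ) = T (P μ) := by
      intro μ hμ
      set q := T (P μ) with hq
      have hqq_mem : q * q ∈ J₂ := by
        have h := hjordan₂ q (hQJ μ hμ) q (hQJ μ hμ)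
        rwa [show (2:ℂ)⁻¹ • (q*q + q*q) = q*q by
          rw [← two_smul ℂ (q*q), smul_smul]; norm_num] at h
      have hqqpsd : (q*q).PosSemidef := by
        have h := posSemidef_conjTranspose_mul_self q
        rwa [hQh μ hμ] at h
      have hmid : (q - q*q).PosSemidef := JAux.interval_sq (hQpsd μ hμ) (hQ1psd μ hμ)
      have h1qq : (1 - q*q).PosSemidef := by
        have h := (hQ1psd μ hμ).add hmid
        rwa [show (1 - q) + (q - q*q) = 1 - q*q by abel] at h
      have hvpsd' : ((2:ℂ) • q - q*q).PosSemidef := by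
        have h := (hQpsd μ hμ).add hmid
        rwa [show q + (q - q*q) = (2:ℂ) • q - q*q by module] at h
      have h1v' : (1 - ((2:ℂ) • q - q*q)).PosSemidef := by
        have h := posSemidef_conjTranspose_mul_self (1 - q)
        have he : (1-q)ᴴ * (1-q) = 1 - ((2:ℂ) • q - q*q) := by
          rw [conjTranspose_sub, conjTranspose_one, hQh μ hμ, two_smul]
          noncomm_ring
        rwa [he] at h
      have hvmem : (2:ℂ) • q - q*q ∈ J₂ := J₂.sub_mem (J₂.smul_mem _ (hQJ μ hμ)) hqq_mem
      obtain ⟨u, huJ, hupsd, hTu⟩ := hposTinv _ hqq_mem hqqpsd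
      obtain ⟨v, hvJ, hvpsd, hTv⟩ := hposTinv _ hvmem hvpsd'
      have h1u : (1 - u).PosSemidef := by
        apply hrefl _ (J₁.sub_mem hone₁ huJ)
        rw [map_sub, hunital, hTu]; exact h1qq
      have h1v : (1 - v).PosSemidef := by
        apply hrefl _ (J₁.sub_mem hone₁ hvJ)
        rw [map_sub, hunital, hTv]; exact h1v'
      have hsum : u + v = (2:ℂ) • P μ := by
        apply hinj _ (J₁.add_mem huJ hvJ) _ (J₁.smul_mem _ (hPJ μ hμ))
        rw [map_add, hTu, hTv, T.map_smul]
        module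
      have hup : u = P μ :=
        JAux.extreme (hPh μ hμ) (hPi μ hμ) hupsd h1u hvpsd h1v hsum
      rw [← hTu, hup]
    have hQo : ∀ μ ∈ s, ∀ ν ∈ s, μ ≠ ν → T (P μ) * T (P ν) = 0 := by
      intro μ hμ ν hν hne
      have hrh : ((1 : Matrix (Fin n) (Fin n) ℂ) - P μ - P ν)ᴴ = 1 - P μ - P ν := by
        rw [conjTranspose_sub, conjTranspose_sub, conjTranspose_one, hPh μ hμ, hPh ν hν]
      have hri : ((1 : Matrix (Fin n) (Fin n) ℂ) - P μ - P ν) * (1 - P μ - P ν)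
          = 1 - P μ - P ν := by
        calc ((1 : Matrix (Fin n) (Fin n) ℂ) - P μ - P ν) * (1 - P μ - P ν)
            = 1 - P μ - P ν - P μ + P μ * P μ + P μ * P ν - P ν + P ν * P μ + P ν * P ν := by
              noncomm_ring
          _ = 1 - P μ - P ν := by
              rw [hPi μ hμ, hPi ν hν, hPo μ hμ ν hν hne, hPo ν hν μ hμ hne.symm]; abel
      have hrpsd := JAux.proj_psd hrh hri
      have hrJ : (1 : Matrix (Fin n) (Fin n) ℂ) - P μ - P ν ∈ J₁ :=
        J₁.sub_mem (J₁.sub_mem hone₁ (hPJ μ hμ)) (hPJ ν hν)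
      have hTr : (1 - T (P μ) - T (P ν)).PosSemidef := by
        have h := hposT _ hrJ hrpsd
        rwa [map_sub, map_sub, hunital] at h
      exact JAux.orth (hQh μ hμ) (hQi μ hμ) (hQi ν hν) hTr
    have hTx : T x = ∑ μ ∈ s, μ • T (P μ) := by
      conv_lhs => rw [hxP]
      rw [map_sum]
      exact Finset.sum_congr rfl fun μ _ => map_smul T μ (P μ)
    have hxx : x * x = ∑ μ ∈ s, (μ * μ) • P μ := by
      conv_lhs => rw [hxP]
      exact JAux.sq_of_orth hPi hPo
    rw [hxx, map_sum, hTx]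
    rw [JAux.sq_of_orth hQi hQo]
    exact Finset.sum_congr rfl fun μ _ => map_smul T (μ * μ) (P μ)
  -- polarization: hermitian pairs
  have hpol : ∀ x ∈ J₁, xᴴ = x → ∀ z ∈ J₁, zᴴ = z →
      T (x * z + z * x) = T x * T z + T z * T x := by
    intro x hxJ hxH z hzJ hzH
    have h1 := hsq (x + z) (J₁.add_mem hxJ hzJ) (by rw [conjTranspose_add, hxH, hzH])
    have h2 := hsq x hxJ hxH
    have h3 := hsq z hzJ hzH
    have expand : (x + z) * (x + z) = x * x + z * z + (x * z + z * x) := by noncomm_ring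
    rw [expand] at h1
    simp only [map_add] at h1 ⊢
    rw [h2, h3] at h1
    have expand2 : (T x + T z) * (T x + T z)
        = T x * T x + T z * T z + (T x * T z + T z * T x) := by noncomm_ring
    rw [expand2] at h1
    exact add_left_cancel h1
  -- general case via decomposition into hermitian parts
  intro a ha b hb
  have hIc : ∀ c : Matrix (Fin n) (Fin n) ℂ, Complex.I • ((-(2:ℂ)⁻¹ * Complex.I) • c)
      = (2:ℂ)⁻¹ • c := by
    intro c
    rw [smul_smul, show Complex.I * (-(2:ℂ)⁻¹ * Complex.I) = (2:ℂ)⁻¹ by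
      have h := Complex.I_mul_I; linear_combination (-(2:ℂ)⁻¹) * h]
  obtain ⟨x, y, z, w, hxdef, hydef, hzdef, hwdef⟩ :
      ∃ x y z w : Matrix (Fin n) (Fin n) ℂ,
        x = (2:ℂ)⁻¹ • (a + aᴴ) ∧ y = (-(2:ℂ)⁻¹ * Complex.I) • (a - aᴴ) ∧
        z = (2:ℂ)⁻¹ • (b + bᴴ) ∧ w = (-(2:ℂ)⁻¹ * Complex.I) • (b - bᴴ) :=
    ⟨_, _, _, _, rfl, rfl, rfl, rfl⟩
  have hxH : xᴴ = x := by
    rw [hxdef, conjTranspose_smul, conjTranspose_add, conjTranspose_conjTranspose]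
    rw [show star ((2:ℂ)⁻¹) = (2:ℂ)⁻¹ by simp]
    rw [add_comm]
  have hzH : zᴴ = z := by
    rw [hzdef, conjTranspose_smul, conjTranspose_add, conjTranspose_conjTranspose]
    rw [show star ((2:ℂ)⁻¹) = (2:ℂ)⁻¹ by simp]
    rw [add_comm]
  have hstarc : star (-(2:ℂ)⁻¹ * Complex.I) = (2:ℂ)⁻¹ * Complex.I := by
    simp [Complex.star_def, _root_.map_mul, map_neg, map_inv₀, Complex.conj_I]
  have hyH : yᴴ = y := by
    rw [hydef, conjTranspose_smul, conjTranspose_sub, conjTranspose_conjTranspose, hstarc]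
    module
  have hwH : wᴴ = w := by
    rw [hwdef, conjTranspose_smul, conjTranspose_sub, conjTranspose_conjTranspose, hstarc]
    module
  have hxJ : x ∈ J₁ := hxdef ▸ J₁.smul_mem _ (J₁.add_mem ha (hstar₁ a ha))
  have hyJ : y ∈ J₁ := hydef ▸ J₁.smul_mem _ (J₁.sub_mem ha (hstar₁ a ha))
  have hzJ : z ∈ J₁ := hzdef ▸ J₁.smul_mem _ (J₁.add_mem hb (hstar₁ b hb))
  have hwJ : w ∈ J₁ := hwdef ▸ J₁.smul_mem _ (J₁.sub_mem hb (hstar₁ b hb))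
  have hadec : a = x + Complex.I • y := by
    rw [hxdef, hydef, hIc]
    module
  have hbdec : b = z + Complex.I • w := by
    rw [hzdef, hwdef, hIc]
    module
  have hTa : T a = T x + Complex.I • T y := by
    conv_lhs => rw [hadec]
    rw [map_add, T.map_smul]
  have hTb : T b = T z + Complex.I • T w := by
    conv_lhs => rw [hbdec]
    rw [map_add, T.map_smul]
  rw [T.map_smul]
  congr 1
  conv_lhs => rw [hadec, hbdec]
  rw [JAux.expand_mul]
  rw [map_sub, map_add, map_add, T.map_smul, T.map_smul]
  rw [hpol x hxJ hxH z hzJ hzH, hpol x hxJ hxH w hwJ hwH,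
    hpol y hyJ hyH z hzJ hzH, hpol y hyJ hyH w hwJ hwH]
  rw [hTa, hTb, JAux.expand_mul]
end
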